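/- arXiv:math/9812078 — 5 statements merged into one kernel-verified Lean document; each statement's English description precedes it below -/
import Mathlib

section
/- Let k ≥ 1 and let I be an ideal of the polynomial ring ℂ[x,y] such that the quotient ℂ[x,y]/I has dimension k as a ℂ-vector space, the images of x and y in ℂ[x,y]/I are nilpotent, and I is homogeneous with respect to the grading in which deg x = 0 and deg y = 1 (i.e., for every f ∈ I, each y-homogeneous component of f again lies in I). For each i ∈ ℕ let n_i be the least natural number n such that x^n y^i ∈ I. Then each n_i is well defined (such an n exists), n_i = 0 for all but finitely many i, the sum ∑_{i∈ℕ} n_i equals k, and I is exactly the ideal of ℂ[x,y] generated by the monomials {x^{n_i} y^i : i ∈ ℕ}. -/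
open MvPolynomial

/-- The variable `x` in `ℂ[x,y]`. -/
noncomputable def Px : MvPolynomial (Fin 2) ℂ := X 0

/-- The variable `y` in `ℂ[x,y]`. -/
noncomputable def Py : MvPolynomial (Fin 2) ℂ := X 1

/-- The `y`-grading weight on `ℂ[x,y]`: `deg x = 0`, `deg y = 1`. -/
def yWeight : Fin 2 → ℕ := ![0, 1]

/-!
Homogeneity lets one test membership in `I` one `y`-degree at a time: the polynomials `p` with
`p(x) y^d ∈ I` form an ideal of `ℂ[x]` containing a power of `x`, hence generated by `x^{n_d}`.
So `I` is the monomial ideal spanned by the `x^{n_d} y^d`, and the monomials `x^a y^b` with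
`a < n_b` project to a basis of the quotient.
-/

namespace MvPolynomial

variable {σ R : Type*} [CommRing R]

lemma isCompl_restrictSupport_compl (s : Set (σ →₀ ℕ)) :
    IsCompl (restrictSupport R s) (restrictSupport R sᶜ) := by
  constructor
  · rw [Submodule.disjoint_def]
    intro p hs hsc
    have h : (p.support : Set (σ →₀ ℕ)) ⊆ s ∩ sᶜ := Set.subset_inter hs hsc
    rwa [Set.inter_compl_self, Set.subset_empty_iff, Finset.coe_eq_empty, support_eq_empty] at h
  · rw [codisjoint_iff, restrictSupport_eq_span, restrictSupport_eq_span, ← Submodule.span_union,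
      ← Set.image_union, Set.union_compl_self, ← restrictSupport_eq_span, restrictSupport_univ]

noncomputable def quotientRestrictSupportIdealEquiv (s : Set (σ →₀ ℕ)) (hs : IsUpperSet s) :
    (MvPolynomial σ R ⧸ restrictSupportIdeal R s hs) ≃ₗ[R] restrictSupport R sᶜ :=
  (Submodule.Quotient.restrictScalarsEquiv R _).symm ≪≫ₗ
    Submodule.quotientEquivOfIsCompl _ _ (isCompl_restrictSupport_compl s)

lemma finrank_quotient_restrictSupportIdeal {K : Type*} [Field K] (s : Set (σ →₀ ℕ))
    (hs : IsUpperSet s) :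
    Module.finrank K (MvPolynomial σ K ⧸ restrictSupportIdeal K s hs) = Nat.card ↥sᶜ := by
  rw [(quotientRestrictSupportIdealEquiv s hs).finrank_eq]
  exact Module.finrank_eq_nat_card_basis (basisRestrictSupport K sᶜ)

end MvPolynomial

lemma Polynomial.mem_iff_X_pow_dvd_of_isLeast {K : Type*} [Field K] {J : Ideal (Polynomial K)}
    {m : ℕ} (hm : IsLeast {j | Polynomial.X ^ j ∈ J} m) {p : Polynomial K} :
    p ∈ J ↔ Polynomial.X ^ m ∣ p := by
  obtain ⟨g, rfl⟩ := (IsPrincipalIdealRing.principal J).principal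
  have hmem : ∀ q, q ∈ Submodule.span (Polynomial K) {g} ↔ g ∣ q := fun q =>
    Ideal.mem_span_singleton
  obtain ⟨j, -, hgj⟩ := (dvd_prime_pow Polynomial.prime_X m).mp ((hmem _).mp hm.1)
  have hj : m = j := by
    refine le_antisymm (hm.2 ((hmem _).mpr hgj.dvd)) ?_
    exact (pow_dvd_pow_iff Polynomial.X_ne_zero Polynomial.not_isUnit_X).mp
      (hgj.dvd_iff_dvd_left.mp ((hmem _).mp hm.1))
  rw [hmem, hj, hgj.dvd_iff_dvd_left]

lemma single_add_single_le_iff {a b : ℕ} {m : Fin 2 →₀ ℕ} :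
    Finsupp.single 0 a + Finsupp.single 1 b ≤ m ↔ a ≤ m 0 ∧ b ≤ m 1 := by
  simp [Finsupp.le_def, Fin.forall_fin_two]

lemma single_zero_add_single_one (m : Fin 2 →₀ ℕ) :
    Finsupp.single 0 (m 0) + Finsupp.single 1 (m 1) = m := by
  ext i; fin_cases i <;> simp

lemma Px_pow_mul_Py_pow (a b : ℕ) :
    Px ^ a * Py ^ b = monomial (Finsupp.single 0 a + Finsupp.single 1 b) (1 : ℂ) := by
  simp [Px, Py, X_pow_eq_monomial, monomial_mul]

lemma weight_yWeight (m : Fin 2 →₀ ℕ) : Finsupp.weight yWeight m = m 1 := by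
  simp [Finsupp.weight_apply, Finsupp.sum_fintype, yWeight]

lemma monomial_eq_C_mul_Px_pow_mul_Py_pow (m : Fin 2 →₀ ℕ) (c : ℂ) :
    monomial m c = C c * (Px ^ m 0 * Py ^ m 1) := by
  rw [Px_pow_mul_Py_pow, C_mul_monomial, mul_one, single_zero_add_single_one]

def aboveStaircase (n : ℕ → ℕ) : Set (Fin 2 →₀ ℕ) := {m | n (m 1) ≤ m 0}

lemma isUpperSet_aboveStaircase {n : ℕ → ℕ} (hn : Antitone n) :
    IsUpperSet (aboveStaircase n) :=
  fun _ _ hab ha => (hn (hab 1)).trans (ha.trans (hab 0))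

lemma span_Px_pow_mul_Py_pow_eq {n : ℕ → ℕ} (hn : Antitone n) :
    Ideal.span (Set.range fun i => Px ^ n i * Py ^ i) =
      restrictSupportIdeal ℂ (aboveStaircase n) (isUpperSet_aboveStaircase hn) := by
  have hrange : (Set.range fun i => Px ^ n i * Py ^ i) =
      (monomial · (1 : ℂ)) ''
        Set.range fun i => Finsupp.single 0 (n i) + Finsupp.single 1 i := by
    simp only [← Set.range_comp, Function.comp_def, Px_pow_mul_Py_pow]
  ext f
  rw [hrange, mem_ideal_span_monomial_image]
  show _ ↔ ↑f.support ⊆ aboveStaircase n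
  constructor
  · rintro h m hm
    obtain ⟨_, ⟨i, rfl⟩, hle⟩ := h m hm
    rw [single_add_single_le_iff] at hle
    exact (hn hle.2).trans hle.1
  · intro h m hm
    exact ⟨_, ⟨m 1, rfl⟩, single_add_single_le_iff.mpr ⟨h hm, le_rfl⟩⟩

lemma nat_card_compl_aboveStaircase {n : ℕ → ℕ} (hn : (Function.support n).Finite) :
    Nat.card ↥(aboveStaircase n)ᶜ = ∑ᶠ i, n i := by
  classical
  set s := hn.toFinset
  have hcompl : (aboveStaircase n)ᶜ = ↑((s.sigma fun b => Finset.range (n b)).image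
      fun p => Finsupp.single (0 : Fin 2) p.2 + Finsupp.single 1 p.1) := by
    ext m
    simp only [aboveStaircase, Set.mem_compl_iff, Set.mem_ofPred_eq, not_le, Finset.coe_image,
      Set.mem_image, Finset.mem_coe, Finset.mem_sigma, Finset.mem_range, s,
      Set.Finite.mem_toFinset, Function.mem_support]
    constructor
    · intro h
      exact ⟨⟨m 1, m 0⟩, ⟨Nat.ne_zero_of_lt h, h⟩, single_zero_add_single_one m⟩
    · rintro ⟨p, ⟨-, hp⟩, rfl⟩
      simpa using hp
  have hinj : Function.Injective
      fun p : (_ : ℕ) × ℕ => Finsupp.single (0 : Fin 2) p.2 + Finsupp.single 1 p.1 := by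
    intro p q h
    have h0 : p.2 = q.2 := by simpa using DFunLike.congr_fun h 0
    have h1 : p.1 = q.1 := by simpa using DFunLike.congr_fun h 1
    exact Sigma.ext h1 (heq_of_eq h0)
  rw [hcompl, Nat.card_coe_set_eq, Set.ncard_coe_finset, Finset.card_image_of_injective _ hinj,
    Finset.card_sigma, finsum_eq_sum n hn]
  simp [s]

lemma MvPolynomial.IsWeightedHomogeneous.exists_eq_aeval_Px_mul_Py_pow
    {g : MvPolynomial (Fin 2) ℂ} {d : ℕ} (hg : g.IsWeightedHomogeneous yWeight d) :
    ∃ p : Polynomial ℂ, g = Polynomial.aeval Px p * Py ^ d := by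
  refine ⟨∑ m ∈ g.support, Polynomial.monomial (m 0) (coeff m g), ?_⟩
  conv_lhs => rw [g.as_sum]
  rw [map_sum, Finset.sum_mul]
  refine Finset.sum_congr rfl fun m hm => ?_
  have hm1 : m 1 = d := by simpa [weight_yWeight] using hg (mem_support_iff.mp hm)
  rw [monomial_eq_C_mul_Px_pow_mul_Py_pow, Polynomial.aeval_monomial, hm1, algebraMap_eq,
    mul_assoc]

section SlicesOfIdeal

variable {I : Ideal (MvPolynomial (Fin 2) ℂ)}

lemma Px_pow_mul_Py_pow_dvd_of_mem {d n : ℕ} (hn : IsLeast {m | Px ^ m * Py ^ d ∈ I} n)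
    {g : MvPolynomial (Fin 2) ℂ} (hgI : g ∈ I) (hg : g.IsWeightedHomogeneous yWeight d) :
    Px ^ n * Py ^ d ∣ g := by
  obtain ⟨p, rfl⟩ := hg.exists_eq_aeval_Px_mul_Py_pow
  set J := (I.colon {Py ^ d}).comap (Polynomial.aeval (R := ℂ) Px)
  have hJ : ∀ q, q ∈ J ↔ Polynomial.aeval Px q * Py ^ d ∈ I := fun q =>
    Submodule.mem_colon_singleton
  have hleast : IsLeast {j | Polynomial.X ^ j ∈ J} n := by simpa [hJ] using hn
  obtain ⟨q, rfl⟩ := (Polynomial.mem_iff_X_pow_dvd_of_isLeast hleast).mp ((hJ p).mpr hgI)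
  exact ⟨Polynomial.aeval Px q, by rw [map_mul, map_pow, Polynomial.aeval_X]; ring⟩

variable {n : ℕ → ℕ}

lemma eq_span_Px_pow_mul_Py_pow (hn : ∀ i, IsLeast {m | Px ^ m * Py ^ i ∈ I} (n i))
    (hhom : ∀ f ∈ I, ∀ d : ℕ, weightedHomogeneousComponent yWeight d f ∈ I) :
    I = Ideal.span (Set.range fun i => Px ^ n i * Py ^ i) := by
  refine le_antisymm (fun f hf => ?_) <|
    Ideal.span_le.mpr <| Set.range_subset_iff.mpr fun i => (hn i).1
  rw [← sum_weightedHomogeneousComponent yWeight f,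
    finsum_eq_sum _ (weightedHomogeneousComponent_finsupp f)]
  refine Ideal.sum_mem _ fun d _ => ?_
  obtain ⟨q, hq⟩ := Px_pow_mul_Py_pow_dvd_of_mem (hn d) (hhom f hf d)
    (weightedHomogeneousComponent_isWeightedHomogeneous d f)
  rw [hq]
  exact Ideal.mul_mem_right _ _ (Ideal.subset_span ⟨d, rfl⟩)

lemma antitone_of_isLeast (hn : ∀ i, IsLeast {m | Px ^ m * Py ^ i ∈ I} (n i)) :
    Antitone n := fun i j hij => (hn j).2 <| by
  rw [Set.mem_ofPred_eq, ← Nat.add_sub_cancel' hij, pow_add, ← mul_assoc]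
  exact I.mul_mem_right _ (hn i).1

lemma finite_support_of_Py_pow_mem (hn : ∀ i, IsLeast {m | Px ^ m * Py ^ i ∈ I} (n i))
    {M : ℕ} (hM : Py ^ M ∈ I) : (Function.support n).Finite :=
  (Set.finite_Iio M).subset fun i hi => by
    by_contra hiM
    rw [Set.mem_Iio, not_lt] at hiM
    refine hi (Nat.le_zero.mp ((hn i).2 ?_))
    rw [Set.mem_ofPred_eq, pow_zero, one_mul, ← Nat.sub_add_cancel hiM, pow_add]
    exact I.mul_mem_left _ hM

end SlicesOfIdeal

lemma finrank_quotient_span_Px_pow_mul_Py_pow {n : ℕ → ℕ} (hn : Antitone n)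
    (hfin : (Function.support n).Finite) :
    Module.finrank ℂ
      (MvPolynomial (Fin 2) ℂ ⧸ Ideal.span (Set.range fun i => Px ^ n i * Py ^ i)) =
        ∑ᶠ i, n i := by
  rw [span_Px_pow_mul_Py_pow_eq hn, finrank_quotient_restrictSupportIdeal,
    nat_card_compl_aboveStaircase hfin]

theorem stmt0_general (k : ℕ) (I : Ideal (MvPolynomial (Fin 2) ℂ))
    (hdim : Module.finrank ℂ (MvPolynomial (Fin 2) ℂ ⧸ I) = k)
    (hx : IsNilpotent (Ideal.Quotient.mk I Px))
    (hy : IsNilpotent (Ideal.Quotient.mk I Py))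
    (hhom : ∀ f ∈ I, ∀ d : ℕ, weightedHomogeneousComponent yWeight d f ∈ I) :
    ∃ n : ℕ → ℕ,
      (∀ i : ℕ, IsLeast {m : ℕ | Px ^ m * Py ^ i ∈ I} (n i)) ∧
      {i : ℕ | n i ≠ 0}.Finite ∧
      (∑ᶠ i : ℕ, n i) = k ∧
      I = Ideal.span (Set.range fun i : ℕ => Px ^ n i * Py ^ i) := by
  obtain ⟨N, hN⟩ := hx
  obtain ⟨M, hM⟩ := hy
  rw [← map_pow, Ideal.Quotient.eq_zero_iff_mem] at hN hM
  set n : ℕ → ℕ := fun i => sInf {m | Px ^ m * Py ^ i ∈ I}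
  have hn : ∀ i, IsLeast {m | Px ^ m * Py ^ i ∈ I} (n i) := fun i =>
    isLeast_csInf ⟨N, I.mul_mem_right _ hN⟩
  have hspan := eq_span_Px_pow_mul_Py_pow hn hhom
  have hfin := finite_support_of_Py_pow_mem hn hM
  refine ⟨n, hn, hfin, ?_, hspan⟩
  rw [← hdim, hspan, finrank_quotient_span_Px_pow_mul_Py_pow (antitone_of_isLeast hn) hfin]

/-- a `y`-graded ideal `I ⊆ ℂ[x,y]` of colength `k ≥ 1` supported at the
origin (images of `x`, `y` nilpotent in the quotient) is generated by the monomials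
`x^{n_i} y^i`, where `n_i` is the least `n` with `x^n y^i ∈ I`; moreover `∑ n_i = k`. -/
theorem stmt0 (k : ℕ) (hk : 1 ≤ k) (I : Ideal (MvPolynomial (Fin 2) ℂ))
    (hdim : Module.finrank ℂ (MvPolynomial (Fin 2) ℂ ⧸ I) = k)
    (hx : IsNilpotent (Ideal.Quotient.mk I Px))
    (hy : IsNilpotent (Ideal.Quotient.mk I Py))
    (hhom : ∀ f ∈ I, ∀ d : ℕ, weightedHomogeneousComponent yWeight d f ∈ I) :
    ∃ n : ℕ → ℕ,
      (∀ i : ℕ, IsLeast {m : ℕ | Px ^ m * Py ^ i ∈ I} (n i)) ∧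
      {i : ℕ | n i ≠ 0}.Finite ∧
      (∑ᶠ i : ℕ, n i) = k ∧
      I = Ideal.span (Set.range fun i : ℕ => Px ^ n i * Py ^ i) :=
  stmt0_general k I hdim hx hy hhom
end

section
/- For every natural number k, the set of ideals I of the polynomial ring ℂ[x,y] satisfying the following three conditions is finite: (1) the quotient ℂ[x,y]/I has dimension k as a ℂ-vector space; (2) the images of x and y in ℂ[x,y]/I are nilpotent; (3) I is homogeneous with respect to the grading in which deg x = 0 and deg y = 1 (for every f ∈ I, each y-homogeneous component of f lies in I). -/
open MvPolynomial

namespace Stmt1Aux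

abbrev R2 : Type := MvPolynomial (Fin 2) ℂ

lemma weight_yWeight (s : Fin 2 →₀ ℕ) : Finsupp.weight yWeight s = s 1 := by
  rw [Finsupp.weight_apply, Finsupp.sum_fintype _ _ (by intro i; simp)]
  simp [yWeight, Fin.sum_univ_two]

lemma monomial_eq_mul (s : Fin 2 →₀ ℕ) (c : ℂ) :
    (monomial s c : R2) = C c * Px ^ (s 0) * Py ^ (s 1) := by
  have hs : Finsupp.single (0 : Fin 2) (s 0) + Finsupp.single 1 (s 1) = s := by
    ext i; fin_cases i <;> simp
  rw [Px, Py, X_pow_eq_monomial, X_pow_eq_monomial, mul_assoc, monomial_mul,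
    C_mul_monomial, hs]
  congr 1
  ring

/-- minimal power of `x` such that `x^a y^j ∈ I`. -/
noncomputable def aJ (I : Ideal R2) (j : ℕ) : ℕ := sInf {a | Px ^ a * Py ^ j ∈ I}

lemma key (I : Ideal R2) (hx : ∃ n, Px ^ n ∈ I) (j : ℕ) :
    (Px ^ (aJ I j) * Py ^ j ∈ I) ∧
      ∀ c : R2, c ∈ I → IsWeightedHomogeneous yWeight c j →
        Px ^ (aJ I j) * Py ^ j ∣ c := by
  classical
  obtain ⟨n, hn⟩ := hx
  set θ : Polynomial ℂ →ₐ[ℂ] R2 := Polynomial.aeval Px with hθ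
  set J : Ideal (Polynomial ℂ) := (I.colon (Ideal.span {Py ^ j})).comap θ with hJdef
  have hmemJ : ∀ p : Polynomial ℂ, p ∈ J ↔ θ p * Py ^ j ∈ I := by
    intro p
    rw [hJdef, Ideal.mem_comap, Ideal.mem_colon_span_singleton]
  have hθX : ∀ a : ℕ, θ (Polynomial.X ^ a) = Px ^ a := by
    intro a; rw [map_pow, hθ, Polynomial.aeval_X]
  have hXn : Polynomial.X ^ n ∈ J := by
    rw [hmemJ, hθX]
    exact I.mul_mem_right _ hn
  obtain ⟨g, hgJ⟩ : ∃ g, J = Ideal.span {g} :=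
    ⟨_, (Ideal.span_singleton_generator J).symm⟩
  have hgdvd : g ∣ Polynomial.X ^ n := Ideal.mem_span_singleton.mp (hgJ ▸ hXn)
  obtain ⟨i, hin, hass⟩ := (dvd_prime_pow Polynomial.prime_X n).mp hgdvd
  have hJ : J = Ideal.span {Polynomial.X ^ i} := by
    rw [hgJ, Ideal.span_singleton_eq_span_singleton.mpr hass]
  have hset : ∀ a : ℕ, (Px ^ a * Py ^ j ∈ I) ↔ i ≤ a := by
    intro a
    rw [← hθX a, ← hmemJ, hJ, Ideal.mem_span_singleton, Polynomial.X_pow_dvd_iff]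
    constructor
    · intro h
      by_contra hlt
      push_neg at hlt
      have := h a hlt
      rw [Polynomial.coeff_X_pow, if_pos rfl] at this
      exact one_ne_zero this
    · intro hia d hd
      rw [Polynomial.coeff_X_pow, if_neg (by omega)]
  have haJ : aJ I j = i := by
    have hSetEq : {a | Px ^ a * Py ^ j ∈ I} = Set.Ici i := by
      ext a; simpa [Set.mem_Ici] using hset a
    rw [aJ, hSetEq, csInf_Ici]
  constructor
  · rw [haJ]; exact (hset i).mpr le_rfl
  · intro c hc hch
    set p : Polynomial ℂ := ∑ s ∈ c.support, Polynomial.C (coeff s c) * Polynomial.X ^ (s 0)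
      with hp
    have hθp : θ p * Py ^ j = c := by
      rw [hp, map_sum, Finset.sum_mul]
      conv_rhs => rw [c.as_sum]
      apply Finset.sum_congr rfl
      intro s hs
      have hsj : s 1 = j := by
        have := hch (mem_support_iff.mp hs)
        rwa [weight_yWeight] at this
      rw [map_mul, map_pow, hθ, Polynomial.aeval_X, Polynomial.aeval_C,
        monomial_eq_mul, hsj]
      rfl
    have hpJ : p ∈ J := (hmemJ p).mpr (by rw [hθp]; exact hc)
    obtain ⟨q, hq⟩ := Ideal.mem_span_singleton.mp (hJ ▸ hpJ)
    refine ⟨θ q, ?_⟩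
    rw [haJ, ← hθp, hq, map_mul, hθX]
    ring

lemma span_eq (I : Ideal R2) (hx : ∃ n, Px ^ n ∈ I)
    (hhom : ∀ f ∈ I, ∀ d : ℕ, weightedHomogeneousComponent yWeight d f ∈ I) :
    I = Ideal.span (Set.range fun j => Px ^ (aJ I j) * Py ^ j) := by
  apply le_antisymm
  · intro f hf
    rw [← sum_weightedHomogeneousComponent yWeight f,
      finsum_eq_sum _ (weightedHomogeneousComponent_finsupp f)]
    apply Ideal.sum_mem
    intro d _
    obtain ⟨q, hq⟩ := (key I hx d).2 _ (hhom f hf d)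
      (weightedHomogeneousComponent_isWeightedHomogeneous d f)
    rw [hq]
    exact Ideal.mul_mem_right _ _ (Ideal.subset_span ⟨d, rfl⟩)
  · rw [Ideal.span_le]
    rintro _ ⟨j, rfl⟩
    exact (key I hx j).1

lemma finiteQuotient (I : Ideal R2) (n m : ℕ) (hx : Px ^ n ∈ I) (hy : Py ^ m ∈ I) :
    Module.Finite ℂ (R2 ⧸ I) := by
  classical
  set T : Finset (R2 ⧸ I) :=
    ((Finset.range n) ×ˢ (Finset.range m)).image
      (fun p => Ideal.Quotient.mk I (Px ^ p.1 * Py ^ p.2)) with hT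
  refine ⟨⟨T, ?_⟩⟩
  rw [eq_top_iff]
  rintro z -
  obtain ⟨f, rfl⟩ := Ideal.Quotient.mk_surjective z
  rw [f.as_sum, map_sum]
  apply Submodule.sum_mem
  intro s _
  have hmk : ∀ g : R2, Ideal.Quotient.mk I g = Ideal.Quotient.mkₐ ℂ I g := fun g => rfl
  rw [hmk, monomial_eq_mul, mul_assoc, C_mul', map_smul]
  apply Submodule.smul_mem
  rw [← hmk]
  by_cases h0 : s 0 < n
  · by_cases h1 : s 1 < m
    · apply Submodule.subset_span
      simp only [hT, Finset.coe_image, Set.mem_image, Finset.mem_coe,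
        Finset.mem_product, Finset.mem_range]
      exact ⟨(s 0, s 1), ⟨h0, h1⟩, rfl⟩
    · push_neg at h1
      have hmem : Px ^ s 0 * Py ^ s 1 ∈ I := by
        have hsplit : Py ^ s 1 = Py ^ m * Py ^ (s 1 - m) := by
          rw [← pow_add]; congr 1; omega
        rw [hsplit, ← mul_assoc]
        exact I.mul_mem_right _ (I.mul_mem_left _ hy)
      rw [Ideal.Quotient.eq_zero_iff_mem.mpr hmem]
      exact Submodule.zero_mem _
  · push_neg at h0
    have hmem : Px ^ s 0 * Py ^ s 1 ∈ I := by
      have hsplit : Px ^ s 0 = Px ^ n * Px ^ (s 0 - n) := by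
        rw [← pow_add]; congr 1; omega
      rw [hsplit, mul_assoc]
      exact I.mul_mem_right _ hx
    rw [Ideal.Quotient.eq_zero_iff_mem.mpr hmem]
    exact Submodule.zero_mem _

lemma pow_finrank_eq_zero {A : Type} [CommRing A] [Algebra ℂ A] [Module.Finite ℂ A]
    {t : A} (ht : IsNilpotent t) : t ^ Module.finrank ℂ A = 0 := by
  have h1 : IsNilpotent (Algebra.lmul ℂ A t) := ht.map (Algebra.lmul ℂ A)
  have h3 := LinearMap.aeval_self_charpoly (Algebra.lmul ℂ A t)
  rw [(LinearMap.isNilpotent_iff_charpoly (Algebra.lmul ℂ A t)).mp h1, map_pow,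
    Polynomial.aeval_X] at h3
  calc t ^ Module.finrank ℂ A = (Algebra.lmul ℂ A t ^ Module.finrank ℂ A) 1 := by
        rw [← map_pow]
        simp
      _ = 0 := by rw [h3]; rfl

lemma facts {k : ℕ} (I : Ideal R2)
    (hk : Module.finrank ℂ (R2 ⧸ I) = k)
    (hnx : IsNilpotent (Ideal.Quotient.mk I Px))
    (hny : IsNilpotent (Ideal.Quotient.mk I Py))
    (hhom : ∀ f ∈ I, ∀ d : ℕ, weightedHomogeneousComponent yWeight d f ∈ I) :
    (∀ j, aJ I j ≤ k) ∧ (∀ j, k ≤ j → aJ I j = 0) ∧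
      I = Ideal.span (Set.range fun j => Px ^ (aJ I j) * Py ^ j) := by
  obtain ⟨n, hn⟩ := hnx
  obtain ⟨m, hm⟩ := hny
  have hxn : Px ^ n ∈ I := by rwa [← map_pow, Ideal.Quotient.eq_zero_iff_mem] at hn
  have hym : Py ^ m ∈ I := by rwa [← map_pow, Ideal.Quotient.eq_zero_iff_mem] at hm
  haveI := finiteQuotient I n m hxn hym
  have hxk : Px ^ k ∈ I := by
    have h := pow_finrank_eq_zero (⟨n, hn⟩ : IsNilpotent (Ideal.Quotient.mk I Px))
    rw [hk] at h
    rwa [← map_pow, Ideal.Quotient.eq_zero_iff_mem] at h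
  have hyk : Py ^ k ∈ I := by
    have h := pow_finrank_eq_zero (⟨m, hm⟩ : IsNilpotent (Ideal.Quotient.mk I Py))
    rw [hk] at h
    rwa [← map_pow, Ideal.Quotient.eq_zero_iff_mem] at h
  refine ⟨?_, ?_, span_eq I ⟨n, hxn⟩ hhom⟩
  · intro j
    exact Nat.sInf_le (I.mul_mem_right _ hxk)
  · intro j hj
    have h0 : Px ^ 0 * Py ^ j ∈ I := by
      have hsplit : Py ^ j = Py ^ k * Py ^ (j - k) := by
        rw [← pow_add]; congr 1; omega
      rw [pow_zero, one_mul, hsplit]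
      exact I.mul_mem_right _ hyk
    exact Nat.le_zero.mp (Nat.sInf_le h0)

lemma F_finite (k : ℕ) :
    {a : ℕ → ℕ | (∀ j, a j ≤ k) ∧ ∀ j, k ≤ j → a j = 0}.Finite := by
  apply Set.Finite.of_finite_image (f := fun a (i : Fin k) => a i)
  · apply Set.Finite.subset (Set.finite_Icc (fun _ : Fin k => 0) fun _ => k)
    rintro _ ⟨a, ha, rfl⟩
    simp only [Set.mem_Icc, Pi.le_def]
    exact ⟨fun i => Nat.zero_le _, fun i => ha.1 i⟩
  · intro a ha b hb hab
    funext j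
    rcases lt_or_ge j k with hj | hj
    · exact congrFun hab ⟨j, hj⟩
    · rw [ha.2 j hj, hb.2 j hj]

end Stmt1Aux

/-- for each `k`, there are only finitely many ideals `I ⊆ ℂ[x,y]` such that
`dim_ℂ ℂ[x,y]/I = k`, the images of `x` and `y` in the quotient are nilpotent, and `I` is
homogeneous for the grading with `deg x = 0`, `deg y = 1`. -/
theorem stmt1 (k : ℕ) :
    {I : Ideal (MvPolynomial (Fin 2) ℂ) |
      Module.finrank ℂ (MvPolynomial (Fin 2) ℂ ⧸ I) = k ∧
      IsNilpotent (Ideal.Quotient.mk I Px) ∧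
      IsNilpotent (Ideal.Quotient.mk I Py) ∧
      ∀ f ∈ I, ∀ d : ℕ, weightedHomogeneousComponent yWeight d f ∈ I}.Finite := by
  refine Set.Finite.of_finite_image (f := Stmt1Aux.aJ) ?_ ?_
  · refine Set.Finite.subset (Stmt1Aux.F_finite k) ?_
    rintro _ ⟨I, ⟨hk, hnx, hny, hhom⟩, rfl⟩
    obtain ⟨h1, h2, -⟩ := Stmt1Aux.facts I hk hnx hny hhom
    exact ⟨h1, h2⟩
  · rintro I ⟨hk, hnx, hny, hhom⟩ I' ⟨hk', hnx', hny', hhom'⟩ hEq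
    obtain ⟨-, -, h3⟩ := Stmt1Aux.facts I hk hnx hny hhom
    obtain ⟨-, -, h3'⟩ := Stmt1Aux.facts I' hk' hnx' hny' hhom'
    rw [h3, h3', hEq]
end

section
/- Let m be a natural number and n : ℕ → ℕ any function. Let I be the ideal of the polynomial ring ℂ[x,y] generated by the monomials x^{n(i)} y^i for 0 ≤ i < m together with y^m. Then the ℂ-vector space dimension of the quotient ℂ[x,y]/I is at most ∑_{i<m} n(i); in particular this quotient is finite-dimensional over ℂ. -/
/-!
The quotient is spanned by the images of the monomials `x^a y^b`, and every monomial lying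
outside the staircase `{(a, b) | b < m, a < n b}` is divisible by one of the generators, so it
vanishes in the quotient. Hence the `∑_{i<m} n(i)` monomials under the staircase span it.
-/

open MvPolynomial

open Module Submodule

theorem Module.Basis.span_image_eq_top_of_surjective {ι R M N : Type*} [Semiring R]
    [AddCommMonoid M] [Module R M] [AddCommMonoid N] [Module R N] (b : Basis ι R M)
    {f : M →ₗ[R] N} (hf : Function.Surjective f) {S : Set ι} (hS : ∀ i ∉ S, f (b i) = 0) :
    span R ((f ∘ b) '' S) = ⊤ := by
  rw [eq_top_iff, ← LinearMap.range_eq_top.mpr hf, LinearMap.range_eq_map, ← b.span_eq,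
    map_span, span_le]
  rintro _ ⟨_, ⟨i, rfl⟩, rfl⟩
  by_cases hi : i ∈ S
  · exact subset_span ⟨i, hi, rfl⟩
  · simp [hS i hi]

theorem Module.Basis.finiteDimensional_and_finrank_le_of_surjective {ι K M N : Type*}
    [DivisionRing K] [AddCommGroup M] [Module K M] [AddCommGroup N] [Module K N]
    (b : Basis ι K M) {f : M →ₗ[K] N} (hf : Function.Surjective f) (S : Finset ι)
    (hS : ∀ i ∉ S, f (b i) = 0) :
    FiniteDimensional K N ∧ finrank K N ≤ S.card := by
  classical
  have hspan : span K (S.image (f ∘ b) : Set N) = ⊤ := by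
    rw [Finset.coe_image]; exact b.span_image_eq_top_of_surjective hf hS
  refine ⟨⟨⟨_, hspan⟩⟩, ?_⟩
  calc finrank K N = finrank K (span K (S.image (f ∘ b) : Set N)) := by rw [hspan, finrank_top]
    _ ≤ (S.image (f ∘ b)).card := finrank_span_finset_le_card _
    _ ≤ S.card := Finset.card_image_le

theorem monomial_eq_Px_pow_mul_Py_pow (d : Fin 2 →₀ ℕ) :
    monomial d (1 : ℂ) = Px ^ d 0 * Py ^ d 1 := by
  rw [monomial_eq, Finsupp.prod_fintype _ _ fun _ => pow_zero _, Fin.prod_univ_two, C_1,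
    one_mul, Px, Py]

theorem Px_pow_mul_Py_pow_mem_span {m a b : ℕ} {n : ℕ → ℕ} (h : ¬(b < m ∧ a < n b)) :
    Px ^ a * Py ^ b ∈
      Ideal.span (insert (Py ^ m) ((fun i : ℕ => Px ^ n i * Py ^ i) '' Set.Iio m)) := by
  by_cases hb : b < m
  · exact Ideal.mem_of_dvd _ (mul_dvd_mul_right (pow_dvd_pow _ (by omega)) _)
      (Ideal.subset_span (Set.mem_insert_of_mem _ ⟨b, hb, rfl⟩))
  · exact Ideal.mem_of_dvd _ (dvd_mul_of_dvd_right (pow_dvd_pow _ (by omega)) _)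
      (Ideal.subset_span (Set.mem_insert _ _))

/-- The exponents `(a, b)` of `x^a y^b` with `b < m` and `a < n b`. -/
noncomputable def staircase (m : ℕ) (n : ℕ → ℕ) : Finset (Fin 2 →₀ ℕ) :=
  ((Finset.range m).sigma fun i => Finset.range (n i)).image
    fun p => Finsupp.single 0 p.2 + Finsupp.single 1 p.1

theorem card_staircase_le (m : ℕ) (n : ℕ → ℕ) :
    (staircase m n).card ≤ ∑ i ∈ Finset.range m, n i :=
  Finset.card_image_le.trans_eq (by simp)

theorem monomial_mem_span_of_notMem_staircase {m : ℕ} {n : ℕ → ℕ} {d : Fin 2 →₀ ℕ}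
    (hd : d ∉ staircase m n) :
    monomial d (1 : ℂ) ∈
      Ideal.span (insert (Py ^ m) ((fun i : ℕ => Px ^ n i * Py ^ i) '' Set.Iio m)) := by
  rw [monomial_eq_Px_pow_mul_Py_pow]
  refine Px_pow_mul_Py_pow_mem_span fun ⟨hm, hn⟩ => hd (Finset.mem_image.mpr ?_)
  refine ⟨⟨d 1, d 0⟩, Finset.mem_sigma.mpr ⟨Finset.mem_range.mpr hm, Finset.mem_range.mpr hn⟩, ?_⟩
  ext i
  fin_cases i <;> simp

/-- if `I ⊆ ℂ[x,y]` is the ideal generated by the monomials `x^{n(i)} y^i`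
for `0 ≤ i < m` together with `y^m`, then `dim_ℂ ℂ[x,y]/I ≤ ∑_{i<m} n(i)`; in particular
the quotient is finite-dimensional over `ℂ`. -/
theorem stmt2 (m : ℕ) (n : ℕ → ℕ)
    (I : Ideal (MvPolynomial (Fin 2) ℂ))
    (hI : I = Ideal.span
      (insert (Py ^ m) ((fun i : ℕ => Px ^ n i * Py ^ i) '' Set.Iio m))) :
    FiniteDimensional ℂ (MvPolynomial (Fin 2) ℂ ⧸ I) ∧
    Module.finrank ℂ (MvPolynomial (Fin 2) ℂ ⧸ I) ≤ ∑ i ∈ Finset.range m, n i := by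
  subst hI
  obtain ⟨hfin, hrank⟩ := (basisMonomials (Fin 2) ℂ).finiteDimensional_and_finrank_le_of_surjective
    (f := (Ideal.Quotient.mkₐ ℂ _).toLinearMap) (Ideal.Quotient.mkₐ_surjective ℂ _)
    (staircase m n) fun d hd => by
      simpa [Ideal.Quotient.eq_zero_iff_mem] using monomial_mem_span_of_notMem_staircase hd
  exact ⟨hfin, hrank.trans (card_staircase_le m n)⟩
end

section
/- Let W be a finite-dimensional complex vector space and let L ⊆ W be a rational lattice, i.e., a ℚ-linear subspace such that the natural ℝ-linear map L ⊗_ℚ ℝ → W is bijective. Assume that L is generic, meaning that every ℂ-linear endomorphism f of W with f(L) ⊆ L is multiplication by a rational scalar. Then every ℂ-linear automorphism g of W of finite order satisfying g(L) = L is equal to the identity or to minus the identity. -/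
open TensorProduct

/-- if `L` is a generic rational lattice in a finite-dimensional complex vector
space `W` (every `ℂ`-endomorphism preserving `L` is a rational scalar), then every finite-order
`ℂ`-linear automorphism `g` of `W` with `g(L) = L` is `±1`. -/
theorem stmt4 (W : Type*) [AddCommGroup W]
    [Module ℚ W] [Module ℝ W] [Module ℂ W]
    [IsScalarTower ℚ ℝ W] [IsScalarTower ℚ ℂ W] [IsScalarTower ℝ ℂ W]
    [FiniteDimensional ℂ W]
    (L : Submodule ℚ W)
    -- `L` is a rational lattice: the natural map `L ⊗_ℚ ℝ → W` is bijective
    (hlat : Function.Bijective (L.subtype.liftBaseChange ℝ : ℝ ⊗[ℚ] L →ₗ[ℝ] W))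
    -- `L` is generic: every `ℂ`-linear endomorphism preserving `L` is a rational scalar
    (hgen : ∀ f : W →ₗ[ℂ] W, (∀ x ∈ L, f x ∈ L) → ∃ q : ℚ, f = (q : ℂ) • LinearMap.id)
    (g : W ≃ₗ[ℂ] W) (hord : IsOfFinOrder g)
    (hgL : (⇑g) '' (L : Set W) = L) :
    g.toLinearMap = LinearMap.id ∨ g.toLinearMap = -LinearMap.id := by
  obtain ⟨q, hq⟩ := hgen g.toLinearMap (fun x hx => by
    have : g x ∈ ((⇑g) '' (L : Set W)) := Set.mem_image_of_mem _ hx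
    rwa [hgL] at this)
  have hgw : ∀ w : W, g w = (q : ℂ) • w := fun w => by
    have := congrArg (fun f => f w) hq
    simpa using this
  by_cases hW : Subsingleton W
  · left; ext w; exact Subsingleton.elim _ _
  · rw [not_subsingleton_iff_nontrivial] at hW
    obtain ⟨w, hw⟩ := exists_ne (0 : W)
    obtain ⟨n, hn, hgn⟩ := isOfFinOrder_iff_pow_eq_one.mp hord
    have key : ∀ m : ℕ, (g ^ m) w = ((q : ℂ) ^ m) • w := by
      intro m
      induction m with
      | zero => simp
      | succ k ih =>
        rw [pow_succ', pow_succ']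
        have : (g * g ^ k) w = g ((g ^ k) w) := rfl
        rw [this, ih, map_smul, hgw, smul_smul]; ring_nf
    have h1 : ((q : ℂ) ^ n) • w = w := by
      rw [← key, hgn]; rfl
    have h2 : (q : ℂ) ^ n = 1 := by
      have hz : ((q : ℂ) ^ n - 1) • w = 0 := by rw [sub_smul, h1, one_smul, sub_self]
      rcases smul_eq_zero.mp hz with h' | h'
      · exact sub_eq_zero.mp h'
      · exact absurd h' hw
    have hqn : q ^ n = 1 := by
      have : ((q ^ n : ℚ) : ℂ) = ((1 : ℚ) : ℂ) := by push_cast; simpa using h2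
      exact_mod_cast this
    have : q = 1 ∨ q = -1 ∧ Even n := by
      rcases pow_eq_one_iff_cases.mp hqn with h | h | h
      · omega
      · exact Or.inl h
      · exact Or.inr h
    rcases this with h | ⟨h, -⟩
    · left; rw [hq, h]; simp
    · right; rw [hq, h]; ext x; simp
end

section
/- Let G be a finite group acting faithfully and ℂ-linearly on a complex vector space V. Consider the space W of functions from G to V, with the group Perm(G) of permutations of the underlying set of G acting by (σ · f)(g) = f(σ⁻¹(g)). Let Δ ⊆ W be the image of the ℂ-linear map V → W sending v to the function g ↦ g · v. Then a permutation σ ∈ Perm(G) satisfies σ · Δ = Δ if and only if there exists h ∈ G such that σ is the right-translation map g ↦ g h. In particular, the normalizer of Δ in Perm(G) is a subgroup isomorphic to G. -/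
/-!
Write `Δ` for the image of the coaction `v ↦ (g ↦ ρ g v)`. A function `f : G → V` lies in `Δ`
exactly when `f g = ρ g (f 1)` for all `g`, so `Δ` is stable under right translations. Conversely,
if `σ · Δ ⊆ Δ`, evaluating this identity on `σ · (g ↦ ρ g v)` gives `ρ (σ⁻¹ g) = ρ (g * σ⁻¹ 1)`,
and faithfulness turns this into `σ⁻¹ g = g * σ⁻¹ 1`, i.e. `σ` is a right translation.
-/

open Function LinearMap MulOpposite

section Coaction

variable {k G V : Type*} [CommSemiring k] [AddCommMonoid V] [Module k V]

theorem mem_range_pi_iff [Monoid G] (ρ : Representation k G V) (f : G → V) :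
    f ∈ range (LinearMap.pi fun g : G => ρ g) ↔ ∀ g, f g = ρ g (f 1) := by
  constructor
  · rintro ⟨v, rfl⟩ g
    simp
  · intro hf
    exact ⟨f 1, funext fun g => (hf g).symm⟩

variable [Group G] (ρ : Representation k G V)

theorem funLeft_mulRight_inv_comp_pi (h : G) :
    funLeft k V ⇑(Equiv.mulRight h)⁻¹ ∘ₗ LinearMap.pi (fun g : G => ρ g) =
      LinearMap.pi (fun g : G => ρ g) ∘ₗ ρ h⁻¹ := by
  ext v g
  simp [Equiv.Perm.inv_def, Equiv.mulRight_symm]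

theorem map_funLeft_mulRight_inv_range (h : G) :
    Submodule.map (funLeft k V ⇑(Equiv.mulRight h)⁻¹) (range (LinearMap.pi fun g : G => ρ g)) =
      range (LinearMap.pi fun g : G => ρ g) := by
  have hsurj : range (ρ h⁻¹) = ⊤ := range_eq_top.mpr fun v =>
    ⟨ρ h v, by rw [← Module.End.mul_apply, ← map_mul, inv_mul_cancel, map_one]; rfl⟩
  rw [← range_comp, funLeft_mulRight_inv_comp_pi, range_comp_of_range_eq_top _ hsurj]

theorem eq_mulRight_of_map_funLeft_range_le (hρ : Injective ρ) (σ : Equiv.Perm G)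
    (hσ : Submodule.map (funLeft k V ⇑σ⁻¹) (range (LinearMap.pi fun g : G => ρ g)) ≤
      range (LinearMap.pi fun g : G => ρ g)) :
    σ = Equiv.mulRight (σ⁻¹ 1)⁻¹ := by
  have hrep : ∀ g, ρ (σ⁻¹ g) = ρ (g * σ⁻¹ 1) := fun g => by
    ext v
    have hmem := (mem_range_pi_iff ρ _).mp
      (hσ (Submodule.mem_map_of_mem (mem_range_self (LinearMap.pi fun g : G => ρ g) v))) g
    simpa [Module.End.mul_apply] using hmem
  have hinv : σ⁻¹ = Equiv.mulRight (σ⁻¹ 1) := Equiv.ext fun g => hρ (hrep g)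
  exact (inv_inv σ).symm.trans ((congrArg (·⁻¹) hinv).trans (Equiv.mulRight_symm _))

theorem map_funLeft_range_eq_iff (hρ : Injective ρ) (σ : Equiv.Perm G) :
    Submodule.map (funLeft k V ⇑σ⁻¹) (range (LinearMap.pi fun g : G => ρ g)) =
        range (LinearMap.pi fun g : G => ρ g) ↔
      ∃ h : G, σ = Equiv.mulRight h := by
  constructor
  · exact fun hσ => ⟨_, eq_mulRight_of_map_funLeft_range_le ρ hρ σ hσ.le⟩
  · rintro ⟨h, rfl⟩
    exact map_funLeft_mulRight_inv_range ρ h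

end Coaction

section RightTranslations

variable (G : Type*) [Group G]

def rightTranslations : Subgroup (Equiv.Perm G) :=
  (MulAction.toPermHom Gᵐᵒᵖ G).range

variable {G}

theorem mem_rightTranslations_iff (σ : Equiv.Perm G) :
    σ ∈ rightTranslations G ↔ ∃ h : G, σ = Equiv.mulRight h := by
  constructor
  · rintro ⟨h, rfl⟩
    exact ⟨unop h, rfl⟩
  · rintro ⟨h, rfl⟩
    exact ⟨op h, rfl⟩

noncomputable def rightTranslationsEquiv : rightTranslations G ≃* G :=
  (MonoidHom.ofInjective (f := MulAction.toPermHom Gᵐᵒᵖ G) MulAction.toPerm_injective).symm.trans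
    (MulEquiv.inv' G).symm

end RightTranslations

theorem stmt10_general (G : Type*) [Group G]
    (V : Type*) [AddCommGroup V] [Module ℂ V]
    (ρ : Representation ℂ G V)
    (hfaith : ∀ g : G, (∀ v : V, ρ g v = v) → g = 1) :
    (∀ σ : Equiv.Perm G,
      Submodule.map (LinearMap.funLeft ℂ V ⇑σ⁻¹)
          (LinearMap.range (LinearMap.pi fun g : G => ρ g)) =
        LinearMap.range (LinearMap.pi fun g : G => ρ g) ↔
      ∃ h : G, σ = Equiv.mulRight h) ∧
    ∃ H : Subgroup (Equiv.Perm G),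
      (∀ σ : Equiv.Perm G, σ ∈ H ↔
        Submodule.map (LinearMap.funLeft ℂ V ⇑σ⁻¹)
            (LinearMap.range (LinearMap.pi fun g : G => ρ g)) =
          LinearMap.range (LinearMap.pi fun g : G => ρ g)) ∧
      Nonempty (H ≃* G) := by
  have hρ : Injective ρ :=
    (injective_iff_map_eq_one ρ).mpr fun g hg => hfaith g fun v => by rw [hg]; rfl
  have key := map_funLeft_range_eq_iff ρ hρ
  refine ⟨key, rightTranslations G, fun σ => ?_, ⟨rightTranslationsEquiv⟩⟩
  rw [key, mem_rightTranslations_iff]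

/-- for a faithful `ℂ`-linear action `ρ` of a finite group `G` on `V`, let
`Δ ⊆ Maps(G,V)` be the image of the coaction map `v ↦ (g ↦ ρ g v)`, with the permutation
group of the set `G` acting on `Maps(G,V)` by `(σ · f)(g) = f(σ⁻¹ g)`. Then `σ · Δ = Δ` iff
`σ` is right translation by some `h ∈ G`; in particular the normalizer of `Δ` in `Perm(G)`
is a subgroup isomorphic to `G`. -/
theorem stmt10 (G : Type*) [Group G] [Finite G]
    (V : Type*) [AddCommGroup V] [Module ℂ V]
    (ρ : Representation ℂ G V)
    (hfaith : ∀ g : G, (∀ v : V, ρ g v = v) → g = 1) :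
    (∀ σ : Equiv.Perm G,
      Submodule.map (LinearMap.funLeft ℂ V ⇑σ⁻¹)
          (LinearMap.range (LinearMap.pi fun g : G => ρ g)) =
        LinearMap.range (LinearMap.pi fun g : G => ρ g) ↔
      ∃ h : G, σ = Equiv.mulRight h) ∧
    ∃ H : Subgroup (Equiv.Perm G),
      (∀ σ : Equiv.Perm G, σ ∈ H ↔
        Submodule.map (LinearMap.funLeft ℂ V ⇑σ⁻¹)
            (LinearMap.range (LinearMap.pi fun g : G => ρ g)) =
          LinearMap.range (LinearMap.pi fun g : G => ρ g)) ∧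
      Nonempty (H ≃* G) :=
  stmt10_general G V ρ hfaith
end
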